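/- arXiv:2410.19567 — 3 statements merged into one kernel-verified Lean document; each statement's English description precedes it below -/
import Mathlib

section
/- Let T be a finite tree rooted at a vertex x, let v_1, v_2, …, v_k be the children of x, and for each 1 ≤ i ≤ k let l_i denote the rooted transitive number of v_i, with l_1 ≤ l_2 ≤ … ≤ l_k. Let z be the largest integer such that there exists a subsequence l_{i_1} ≤ l_{i_2} ≤ … ≤ l_{i_z} of (l_1, …, l_k) with l_{i_j} ≥ j for all 1 ≤ j ≤ z, and fix 1 ≤ j ≤ z. If there exists a child v of x other than v_{i_1}, v_{i_2}, …, v_{i_z} whose rooted transitive number is at least j, then for every s with 1 ≤ s ≤ j − 1 there exists a transitive partition π = {V_1, V_2, …, V_{1+z}} of T such that x ∈ V_{1+z} and v_{i_j} ∈ V_s. -/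
variable {V : Type*}

/-- `A` dominates `B` in `G`: every vertex of `B` has a neighbour in `A`. -/
def Dominates (G : SimpleGraph V) (A B : Set V) : Prop :=
  ∀ b ∈ B, ∃ a ∈ A, G.Adj a b

/-- `P` is a partition of the set `W` into `k` (nonempty, pairwise disjoint) parts. -/
def IsPartitionOn (W : Set V) {k : ℕ} (P : Fin k → Set V) : Prop :=
  (∀ i, (P i).Nonempty) ∧ (Pairwise fun i j => Disjoint (P i) (P j)) ∧ (⋃ i, P i) = W

/-- `P` is an upper domatic partition of `G` (of size `k`). -/
def IsUpperDomaticPart (G : SimpleGraph V) {k : ℕ} (P : Fin k → Set V) : Prop :=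
  IsPartitionOn Set.univ P ∧
    ∀ i j : Fin k, i < j → Dominates G (P i) (P j) ∨ Dominates G (P j) (P i)

/-- `P` is a transitive partition of the set `W` (of size `k`), with respect to `G`. -/
def IsTransitivePartOn (G : SimpleGraph V) (W : Set V) {k : ℕ} (P : Fin k → Set V) : Prop :=
  IsPartitionOn W P ∧ ∀ i j : Fin k, i < j → Dominates G (P i) (P j)

/-- The upper domatic number `D(G)`. -/
noncomputable def upperDomaticNumber (G : SimpleGraph V) : ℕ :=
  sSup {k | ∃ P : Fin k → Set V, IsUpperDomaticPart G P}

/-- The transitivity `Tr(G)`. -/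
noncomputable def transitivityNumber (G : SimpleGraph V) : ℕ :=
  sSup {k | ∃ P : Fin k → Set V, IsTransitivePartOn G Set.univ P}

/-- The clique number `ω(G)`. -/
noncomputable def cliqueNumber (G : SimpleGraph V) : ℕ :=
  sSup {n | ∃ s : Finset V, G.IsNClique n s}

/-- The set of vertices reachable from `v` by a walk avoiding `x`.  When `G` is a
tree rooted at `x` and `v` is a child of `x`, this is the vertex set of the
subtree rooted at `v`. -/
def SubtreeAvoiding (G : SimpleGraph V) (x v : V) : Set V :=
  {u | ∃ w : G.Walk v u, x ∉ w.support}

/-- The transitive number of a vertex `v` with respect to the induced subgraph of `G`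
on the vertex set `W`: the largest `p` such that some transitive partition
`{V_1, …, V_k}` of `W` has `v ∈ V_p`. -/
noncomputable def transNumOn (G : SimpleGraph V) (W : Set V) (v : V) : ℕ :=
  sSup {p | ∃ (k : ℕ) (P : Fin k → Set V), IsTransitivePartOn G W P ∧
    ∃ i : Fin k, (i : ℕ) + 1 = p ∧ v ∈ P i}

lemma not_mem_subtreeAvoiding (G : SimpleGraph V) (x c : V) :
    x ∉ SubtreeAvoiding G x c := by
  rintro ⟨w, hw⟩; exact hw w.end_mem_support

lemma mem_subtreeAvoiding_self {G : SimpleGraph V} {x c : V} (h : x ≠ c) :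
    c ∈ SubtreeAvoiding G x c :=
  ⟨SimpleGraph.Walk.nil, by simpa using h⟩

lemma subtreeAvoiding_disjoint {G : SimpleGraph V} (hT : G.IsTree) {x c c' : V}
    (hc : G.Adj x c) (hc' : G.Adj x c') (hne : c ≠ c') :
    Disjoint (SubtreeAvoiding G x c) (SubtreeAvoiding G x c') := by
  classical
  rw [Set.disjoint_left]
  rintro u ⟨w, hw⟩ ⟨w', hw'⟩
  have hp : (SimpleGraph.Walk.cons hc (w.toPath : G.Walk c u)).IsPath := by
    rw [SimpleGraph.Walk.cons_isPath_iff]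
    exact ⟨(w.toPath).2, fun hx => hw (w.support_toPath_subset hx)⟩
  have hp' : (SimpleGraph.Walk.cons hc' (w'.toPath : G.Walk c' u)).IsPath := by
    rw [SimpleGraph.Walk.cons_isPath_iff]
    exact ⟨(w'.toPath).2, fun hx => hw' (w'.support_toPath_subset hx)⟩
  have := (hT.existsUnique_path x u).unique hp hp'
  apply hne
  have h1 := congrArg (fun q : G.Walk x u => q.getVert 1) this
  simpa [SimpleGraph.Walk.getVert_cons_succ] using h1

lemma subtreeAvoiding_cover {G : SimpleGraph V} (hT : G.IsTree) {x u : V} (h : u ≠ x) :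
    ∃ c, G.Adj x c ∧ u ∈ SubtreeAvoiding G x c := by
  obtain ⟨p, hp, -⟩ := hT.existsUnique_path x u
  cases p with
  | nil => exact absurd rfl h.symm
  | cons hadj w =>
    rw [SimpleGraph.Walk.cons_isPath_iff] at hp
    exact ⟨_, hadj, ⟨w, hp.2⟩⟩

lemma transNum_set_bddAbove [Fintype V] (G : SimpleGraph V) (W : Set V) (u : V) :
    ∀ p ∈ {p | ∃ (k : ℕ) (P : Fin k → Set V), IsTransitivePartOn G W P ∧
      ∃ i : Fin k, (i : ℕ) + 1 = p ∧ u ∈ P i}, p ≤ Fintype.card V := by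
  rintro p ⟨k, P, ⟨⟨hne, hdisj, -⟩, -⟩, i, hi, -⟩
  choose f hf using hne
  have hfinj : Function.Injective f := by
    intro a b hab
    by_contra hne'
    exact Set.disjoint_left.mp (hdisj hne') (hf a) (hab ▸ hf b)
  have hcard := Fintype.card_le_of_injective f hfinj
  rw [Fintype.card_fin] at hcard
  have := i.isLt
  omega

lemma one_le_transNumOn [Fintype V] {G : SimpleGraph V} {W : Set V} {u : V} (hu : u ∈ W) :
    1 ≤ transNumOn G W u := by
  apply le_csSup ⟨Fintype.card V, fun p hp => transNum_set_bddAbove G W u p hp⟩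
  refine ⟨1, fun _ => W, ⟨⟨fun _ => ⟨u, hu⟩, ?_, Set.iUnion_const W⟩, ?_⟩, 0, rfl, hu⟩
  · intro a b hab; exact absurd (Subsingleton.elim a b) hab
  · intro a b hab
    have := a.isLt; have := b.isLt
    rw [Fin.lt_def] at hab; omega

lemma exists_transPart_top [Fintype V] {G : SimpleGraph V} {W : Set V} {u : V} {q : ℕ}
    (hq1 : 1 ≤ q) (hq : q ≤ transNumOn G W u) :
    ∃ Q : Fin q → Set V, IsTransitivePartOn G W Q ∧ u ∈ Q ⟨q - 1, by omega⟩ := by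
  set S := {p | ∃ (k : ℕ) (P : Fin k → Set V), IsTransitivePartOn G W P ∧
      ∃ i : Fin k, (i : ℕ) + 1 = p ∧ u ∈ P i} with hS
  have hts : transNumOn G W u = sSup S := rfl
  have hbdd : BddAbove S := ⟨Fintype.card V, fun p hp => transNum_set_bddAbove G W u p hp⟩
  have hSne : S.Nonempty := by
    by_contra hE
    rw [Set.not_nonempty_iff_eq_empty] at hE
    rw [hts, hE] at hq
    simp [csSup_empty] at hq
    omega
  obtain ⟨K, P, hP, i, hi, hui⟩ := Nat.sSup_mem hSne hbdd
  have hiK := i.isLt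
  have hqi : q ≤ (i : ℕ) + 1 := by rw [hts] at hq; omega
  obtain ⟨⟨hne, hdisj, hcup⟩, hdom⟩ := hP
  refine ⟨fun t => if h : (t : ℕ) < q - 1 then P ⟨t, by omega⟩
    else ⋃ (r : Fin K) (_ : q - 1 ≤ (r : ℕ)), P r, ⟨⟨?_, ?_, ?_⟩, ?_⟩, ?_⟩
  · intro t
    dsimp only
    split
    · exact hne _
    · obtain ⟨a, ha⟩ := hne i
      exact ⟨a, Set.mem_iUnion.mpr ⟨i, Set.mem_iUnion.mpr ⟨by omega, ha⟩⟩⟩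
  · intro a b hab
    have hvab : (a : ℕ) ≠ (b : ℕ) := fun h => hab (Fin.ext h)
    dsimp only
    split_ifs with h1 h2 h2
    · exact hdisj (by simp [Fin.ext_iff]; omega)
    · rw [Set.disjoint_left]
      rintro w hw hw'
      simp only [Set.mem_iUnion] at hw'
      obtain ⟨r, hr, hwr⟩ := hw'
      exact Set.disjoint_left.mp (hdisj (show (⟨a, by omega⟩ : Fin K) ≠ r by
        simp [Fin.ext_iff]; omega)) hw hwr
    · rw [Set.disjoint_right]
      rintro w hw hw'
      simp only [Set.mem_iUnion] at hw'
      obtain ⟨r, hr, hwr⟩ := hw'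
      exact Set.disjoint_left.mp (hdisj (show (⟨b, by omega⟩ : Fin K) ≠ r by
        simp [Fin.ext_iff]; omega)) hw hwr
    · exfalso
      have := a.isLt; have := b.isLt
      omega
  · refine Eq.trans ?_ hcup
    apply Set.Subset.antisymm
    · apply Set.iUnion_subset
      intro t
      split
      · exact Set.subset_iUnion _ _
      · exact Set.iUnion_subset fun r => Set.iUnion_subset fun _ => Set.subset_iUnion _ _
    · apply Set.iUnion_subset
      intro r w hw
      by_cases hr : (r : ℕ) < q - 1
      · refine Set.mem_iUnion.mpr ⟨⟨r, by omega⟩, ?_⟩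
        dsimp only
        rw [dif_pos (show ((⟨(r : ℕ), by omega⟩ : Fin q) : ℕ) < q - 1 from hr)]
        simpa using hw
      · refine Set.mem_iUnion.mpr ⟨⟨q - 1, by omega⟩, ?_⟩
        dsimp only
        rw [dif_neg (by simp)]
        exact Set.mem_iUnion.mpr ⟨r, Set.mem_iUnion.mpr ⟨by omega, hw⟩⟩
  · intro a b hab
    rw [Fin.lt_def] at hab
    dsimp only
    split_ifs with h1 h2 h2
    · exact hdom _ _ (by rw [Fin.lt_def]; exact hab)
    · intro w hw
      simp only [Set.mem_iUnion] at hw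
      obtain ⟨r, hr, hwr⟩ := hw
      obtain ⟨a', ha', hadj⟩ := hdom ⟨a, by omega⟩ r (by rw [Fin.lt_def]; dsimp; omega) w hwr
      exact ⟨a', ha', hadj⟩
    · exfalso
      have := b.isLt; omega
    · exfalso
      have := b.isLt; omega
  · dsimp only
    rw [dif_neg (by simp)]
    exact Set.mem_iUnion.mpr ⟨i, Set.mem_iUnion.mpr ⟨by omega, hui⟩⟩

/-- With the setup of Lemma 3.2, fix `1 ≤ j ≤ z`.  If some child of `x`
other than `v_{i₁}, …, v_{i_z}` has rooted transitive number at least `j`, then for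
every `1 ≤ s ≤ j - 1` there is a transitive partition `{V_1, …, V_{1+z}}` of `T` with
`x ∈ V_{1+z}` and `v_{i_j} ∈ V_s`.  (Here `j : Fin z` denotes the `1`-indexed
position `(j : ℕ) + 1`.) -/
theorem tree_transPartition_child_low_position [Fintype V] (G : SimpleGraph V)
    (hT : G.IsTree) (x : V) (k : ℕ) (v : Fin k → V) (hinj : Function.Injective v)
    (hrange : Set.range v = G.neighborSet x)
    (l : Fin k → ℕ)
    (hl : ∀ i, l i = transNumOn G (SubtreeAvoiding G x (v i)) (v i))
    (hmono : Monotone l)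
    (z : ℕ) (idx : Fin z → Fin k) (hidx : StrictMono idx)
    (hidxl : ∀ t : Fin z, (t : ℕ) + 1 ≤ l (idx t))
    (hzmax : ∀ m : ℕ,
      (∃ f : Fin m → Fin k, StrictMono f ∧ ∀ t : Fin m, (t : ℕ) + 1 ≤ l (f t)) → m ≤ z)
    (j : Fin z)
    (hother : ∃ m : Fin k, (∀ t : Fin z, m ≠ idx t) ∧ (j : ℕ) + 1 ≤ l m) :
    ∀ s : ℕ, ∀ _hs1 : 1 ≤ s, ∀ _hs2 : s ≤ (j : ℕ),
      ∃ P : Fin (1 + z) → Set V, IsTransitivePartOn G Set.univ P ∧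
        x ∈ P ⟨z, by omega⟩ ∧ v (idx j) ∈ P ⟨s - 1, by have := j.isLt; omega⟩ := by
  classical
  intro s hs1 hs2
  obtain ⟨m, hm, hml⟩ := hother
  have hjz := j.isLt
  have hadj : ∀ i : Fin k, G.Adj x (v i) := fun i => by
    have : v i ∈ Set.range v := ⟨i, rfl⟩
    rwa [hrange] at this
  set W : Fin k → Set V := fun i => SubtreeAvoiding G x (v i) with hW
  have hviW : ∀ i, v i ∈ W i := fun i => mem_subtreeAvoiding_self (hadj i).ne
  have hWdisj : ∀ i i', i ≠ i' → Disjoint (W i) (W i') :=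
    fun i i' h => subtreeAvoiding_disjoint hT (hadj i) (hadj i') (fun he => h (hinj he))
  have hxW : ∀ i, x ∉ W i := fun i => not_mem_subtreeAvoiding G x (v i)
  have hl1 : ∀ i, 1 ≤ l i := fun i => by rw [hl]; exact one_le_transNumOn (hviW i)
  -- sizes of the subtree partitions
  set n : Fin k → ℕ := fun i =>
    if i = idx j then s else if i = m then (j : ℕ) + 1
    else if h : ∃ t : Fin z, idx t = i then ((h.choose : Fin z) : ℕ) + 1 else 1 with hn
  have hn_idxj : n (idx j) = s := by simp [hn]
  have hn_m : n m = (j : ℕ) + 1 := by simp [hn, hm j]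
  have hn_idx : ∀ t : Fin z, t ≠ j → n (idx t) = (t : ℕ) + 1 := by
    intro t ht
    have h1 : idx t ≠ idx j := fun he => ht (hidx.injective he)
    have h2 : idx t ≠ m := fun he => hm t he.symm
    have hex : ∃ t' : Fin z, idx t' = idx t := ⟨t, rfl⟩
    simp only [hn, if_neg h1, if_neg h2, dif_pos hex]
    rw [hidx.injective hex.choose_spec]
  have hn_pos : ∀ i, 1 ≤ n i := by
    intro i; simp only [hn]; split_ifs <;> omega
  have hn_le_z : ∀ i, n i ≤ z := by
    intro i; simp only [hn]; split_ifs with h1 h2 h3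
    · omega
    · omega
    · exact h3.choose.isLt
    · omega
  have hn_le_l : ∀ i, n i ≤ l i := by
    intro i
    have hli := hl1 i
    by_cases h1 : i = idx j
    · subst h1; rw [hn_idxj]; have := hidxl j; omega
    · by_cases h2 : i = m
      · subst h2; rw [hn_m]; exact hml
      · by_cases h3 : ∃ t : Fin z, idx t = i
        · obtain ⟨t, ht⟩ := h3
          subst ht
          by_cases htj : t = j
          · exact absurd (by rw [htj]) h1
          · rw [hn_idx t htj]; exact hidxl t
        · have : n i = 1 := by simp only [hn, if_neg h1, if_neg h2, dif_neg h3]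
          omega
  have hQex : ∀ i : Fin k, ∃ Q : Fin (n i) → Set V, IsTransitivePartOn G (W i) Q ∧
      v i ∈ Q ⟨n i - 1, by have := hn_pos i; omega⟩ := by
    intro i
    apply exists_transPart_top (hn_pos i)
    have := hn_le_l i
    rw [hl] at this
    exact this
  choose Q hQpart hQtop using hQex
  have hpartsub : ∀ i (r : Fin (n i)), Q i r ⊆ W i := by
    intro i r
    rw [← (hQpart i).1.2.2]
    exact Set.subset_iUnion _ r
  have hD : ∀ p : ℕ, p < z → ∃ i : Fin k, n i = p + 1 := by
    intro p hp
    by_cases hpj : p = (j : ℕ)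
    · exact ⟨m, by rw [hn_m, hpj]⟩
    · refine ⟨idx ⟨p, hp⟩, ?_⟩
      exact hn_idx ⟨p, hp⟩ (fun he => hpj (by rw [Fin.ext_iff] at he; exact he))
  refine ⟨fun p => if h : (p : ℕ) < z then
      ⋃ (i : Fin k) (hp : (p : ℕ) < n i), Q i ⟨p, hp⟩ else {x}, ⟨⟨?_, ?_, ?_⟩, ?_⟩, ?_, ?_⟩
  -- nonempty
  · intro p
    dsimp only
    split_ifs with h
    · obtain ⟨i, hi⟩ := hD p h
      obtain ⟨a, ha⟩ := (hQpart i).1.1 ⟨p, by omega⟩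
      exact ⟨a, Set.mem_iUnion.mpr ⟨i, Set.mem_iUnion.mpr ⟨by omega, ha⟩⟩⟩
    · exact ⟨x, rfl⟩
  -- pairwise disjoint
  · intro p q hpq
    have hvpq : (p : ℕ) ≠ (q : ℕ) := fun h => hpq (Fin.ext h)
    dsimp only
    split_ifs with h1 h2 h2
    · rw [Set.disjoint_left]
      rintro u hu hu'
      simp only [Set.mem_iUnion] at hu hu'
      obtain ⟨i, hpi, hui⟩ := hu
      obtain ⟨i', hqi', hui'⟩ := hu'
      by_cases hii : i = i'
      · subst hii
        exact Set.disjoint_left.mp ((hQpart i).1.2.1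
          (show (⟨p, hpi⟩ : Fin (n i)) ≠ ⟨q, hqi'⟩ by simp [Fin.ext_iff]; omega)) hui hui'
      · exact Set.disjoint_left.mp (hWdisj i i' hii) (hpartsub i _ hui) (hpartsub i' _ hui')
    · rw [Set.disjoint_right]
      rintro u hu hu'
      rw [Set.mem_singleton_iff] at hu; subst hu
      simp only [Set.mem_iUnion] at hu'
      obtain ⟨i, hpi, hui⟩ := hu'
      exact hxW i (hpartsub i _ hui)
    · rw [Set.disjoint_left]
      rintro u hu hu'
      rw [Set.mem_singleton_iff] at hu; subst hu
      simp only [Set.mem_iUnion] at hu'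
      obtain ⟨i, hpi, hui⟩ := hu'
      exact hxW i (hpartsub i _ hui)
    · exfalso
      have := p.isLt; have := q.isLt
      omega
  -- union = univ
  · apply Set.eq_univ_of_forall
    intro u
    rw [Set.mem_iUnion]
    by_cases hux : u = x
    · refine ⟨⟨z, by omega⟩, ?_⟩
      dsimp only
      rw [dif_neg (by simp)]
      exact hux ▸ rfl
    · obtain ⟨c, hc, hu⟩ := subtreeAvoiding_cover hT hux
      have : c ∈ Set.range v := by rw [hrange]; exact hc
      obtain ⟨i, rfl⟩ := this
      have huW : u ∈ W i := hu
      rw [← (hQpart i).1.2.2, Set.mem_iUnion] at huW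
      obtain ⟨r, hr⟩ := huW
      have hrz : (r : ℕ) < z := lt_of_lt_of_le r.isLt (hn_le_z i)
      refine ⟨⟨(r : ℕ), by omega⟩, ?_⟩
      dsimp only
      rw [dif_pos (show ((⟨(r : ℕ), by omega⟩ : Fin (1 + z)) : ℕ) < z from hrz)]
      exact Set.mem_iUnion.mpr ⟨i, Set.mem_iUnion.mpr ⟨r.isLt, by simpa using hr⟩⟩
  -- domination
  · intro p q hpq
    rw [Fin.lt_def] at hpq
    dsimp only
    split_ifs with h1 h2 h2
    · intro u hu
      simp only [Set.mem_iUnion] at hu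
      obtain ⟨i, hqi, hui⟩ := hu
      obtain ⟨a, ha, hadj'⟩ := (hQpart i).2 ⟨p, by omega⟩ ⟨q, hqi⟩
        (by rw [Fin.lt_def]; exact hpq) u hui
      exact ⟨a, Set.mem_iUnion.mpr ⟨i, Set.mem_iUnion.mpr ⟨by omega, ha⟩⟩, hadj'⟩
    · intro b hb
      rw [Set.mem_singleton_iff] at hb; subst hb
      obtain ⟨i, hi⟩ := hD p h1
      refine ⟨v i, Set.mem_iUnion.mpr ⟨i, Set.mem_iUnion.mpr ⟨by omega, ?_⟩⟩, (hadj i).symm⟩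
      have := hQtop i
      have heq : (⟨n i - 1, by have := hn_pos i; omega⟩ : Fin (n i)) = ⟨p, by omega⟩ := by
        simp only [Fin.mk.injEq]; omega
      rwa [heq] at this
    · exfalso; have := q.isLt; omega
    · exfalso; have := q.isLt; omega
  -- x in the last part
  · dsimp only
    rw [dif_neg (by simp)]
    rfl
  -- v (idx j) in part s - 1
  · dsimp only
    rw [dif_pos (show ((⟨s - 1, by omega⟩ : Fin (1 + z)) : ℕ) < z by dsimp; omega)]
    have hp : s - 1 < n (idx j) := by rw [hn_idxj]; omega
    refine Set.mem_iUnion.mpr ⟨idx j, Set.mem_iUnion.mpr ⟨hp, ?_⟩⟩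
    have := hQtop (idx j)
    have heq : (⟨n (idx j) - 1, by have := hn_pos (idx j); omega⟩ : Fin (n (idx j)))
        = ⟨s - 1, hp⟩ := by simp only [Fin.mk.injEq]; omega
    rwa [heq] at this
end

section
/- Let H be a finite simple graph and let π = {V_1, V_2, …, V_k} be a transitive partition of H with v ∈ V_l for some vertex v and some 1 ≤ l ≤ k. Then for every s with 1 ≤ s ≤ l, there exists a transitive partition {W_1, W_2, …, W_s} of size s of the connected component of H containing v such that v ∈ W_s. -/
variable {V : Type*}

/-- If `{V_1, …, V_k}` is a transitive partition of `H` with `v ∈ V_l`,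
then for every `1 ≤ s ≤ l` there is a transitive partition `{W_1, …, W_s}` of the
connected component of `H` containing `v` with `v ∈ W_s`. -/
theorem transPartition_component_lower [Fintype V] (H : SimpleGraph V)
    (k : ℕ) (P : Fin k → Set V) (hP : IsTransitivePartOn H Set.univ P)
    (v : V) (l : ℕ) (hl1 : 1 ≤ l) (hlk : l ≤ k)
    (hv : v ∈ P ⟨l - 1, by omega⟩) :
    ∀ s : ℕ, ∀ _hs1 : 1 ≤ s, ∀ _hs2 : s ≤ l,
      ∃ Q : Fin s → Set V,
        IsTransitivePartOn H {u | H.Reachable v u} Q ∧ v ∈ Q ⟨s - 1, by omega⟩ := by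
  intro s hs1 hs2
  obtain ⟨⟨hne, hdisj, huniv⟩, hdom⟩ := hP
  refine ⟨fun i => {x | H.Reachable v x ∧ ∃ j : Fin k, x ∈ P j ∧ min j.val (s - 1) = i.val},
    ⟨⟨?_, ?_, ?_⟩, ?_⟩, ?_⟩
  · -- nonempty
    intro i
    rcases eq_or_lt_of_le (Nat.le_of_lt_succ (by omega : i.val < s - 1 + 1)) with heq | hlt
    · exact ⟨v, SimpleGraph.Reachable.refl v, ⟨l - 1, by omega⟩, hv, by simp; omega⟩
    · have hik : i.val < k := by omega
      have hlt' : (⟨i.val, hik⟩ : Fin k) < ⟨l - 1, by omega⟩ := by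
        simp [Fin.lt_def]; omega
      obtain ⟨a, haP, hadj⟩ := hdom _ _ hlt' v hv
      exact ⟨a, hadj.reachable.symm, ⟨i.val, hik⟩, haP, by simp; omega⟩
  · -- disjoint
    intro i j hij
    rw [Set.disjoint_left]
    rintro x ⟨hxC, jx, hxj, hmin⟩ ⟨_, jx', hxj', hmin'⟩
    have hjj : jx = jx' := by
      by_contra h
      exact Set.disjoint_left.mp (hdisj h) hxj hxj'
    subst hjj
    exact hij (Fin.ext (by omega))
  · -- union
    ext x
    simp only [Set.mem_iUnion, Set.mem_setOf_eq]
    constructor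
    · rintro ⟨i, hxC, _⟩; exact hxC
    · intro hxC
      have : x ∈ ⋃ j, P j := huniv ▸ Set.mem_univ x
      obtain ⟨j, hj⟩ := Set.mem_iUnion.mp this
      exact ⟨⟨min j.val (s - 1), by omega⟩, hxC, j, hj, rfl⟩
  · -- domination
    intro i j hij b ⟨hbC, m, hbm, hmin⟩
    have him : i.val < m.val := by have := Fin.lt_def.mp hij; omega
    have hik : i.val < k := by omega
    obtain ⟨a, haP, hadj⟩ := hdom ⟨i.val, hik⟩ m (by simp [Fin.lt_def]; omega) b hbm
    refine ⟨a, ⟨hbC.trans hadj.reachable.symm, ⟨i.val, hik⟩, haP, ?_⟩, hadj⟩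
    have := Fin.lt_def.mp hij
    simp; omega
  · exact ⟨SimpleGraph.Reachable.refl v, ⟨l - 1, by omega⟩, hv, by simp; omega⟩
end

section
/- Let H be a finite simple graph and let π = {V_1, V_2, …, V_k} be a transitive partition of H. Let u and v be two vertices lying in the same connected component of H with u ∈ V_{l_p} and v ∈ V_{l_q}, where l_p ≤ l_q. Then for every s with l_p < s ≤ l_q, there exists a transitive partition {W_1, W_2, …, W_s} of size s of the connected component of H containing u such that u ∈ W_{l_p} and v ∈ W_s. -/
variable {V : Type*}

/-- If `{V_1, …, V_k}` is a transitive partition of `H` with `u ∈ V_{l_p}`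
and `v ∈ V_{l_q}`, where `u, v` lie in the same component of `H` and `l_p ≤ l_q`, then
for every `l_p < s ≤ l_q` there is a transitive partition `{W_1, …, W_s}` of the
component of `H` containing `u` with `u ∈ W_{l_p}` and `v ∈ W_s`. -/
theorem transPartition_component_two_vertices [Fintype V] (H : SimpleGraph V)
    (k : ℕ) (P : Fin k → Set V) (hP : IsTransitivePartOn H Set.univ P)
    (u v : V) (hreach : H.Reachable u v)
    (lp lq : ℕ) (hlp1 : 1 ≤ lp) (hlpq : lp ≤ lq) (hlqk : lq ≤ k)
    (hu : u ∈ P ⟨lp - 1, by omega⟩) (hv : v ∈ P ⟨lq - 1, by omega⟩) :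
    ∀ s : ℕ, ∀ _hs1 : lp < s, ∀ _hs2 : s ≤ lq,
      ∃ Q : Fin s → Set V,
        IsTransitivePartOn H {w | H.Reachable u w} Q ∧
          u ∈ Q ⟨lp - 1, by omega⟩ ∧ v ∈ Q ⟨s - 1, by omega⟩ := by
  intro s hs1 hs2
  obtain ⟨⟨hne, hdisj, huniv⟩, hdom⟩ := hP
  refine ⟨fun i => {w | H.Reachable u w ∧ ∃ m : Fin k, w ∈ P m ∧ min m.val (s-1) = i.val},
    ⟨⟨?_, ?_, ?_⟩, ?_⟩, ?_, ?_⟩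
  · -- nonempty
    intro i
    by_cases hi : i.val = s - 1
    · exact ⟨v, hreach, ⟨lq - 1, by omega⟩, hv, by simp; omega⟩
    · have hiv : i.val < s - 1 := by have := i.isLt; omega
      obtain ⟨a, ha, hadj⟩ := hdom ⟨i.val, by omega⟩ ⟨lq - 1, by omega⟩
        (by simp [Fin.lt_def]; omega) v hv
      exact ⟨a, hreach.trans hadj.symm.reachable, ⟨i.val, by omega⟩, ha, by simp; omega⟩
  · -- disjoint
    intro i j hij
    rw [Set.disjoint_left]
    rintro w ⟨_, m, hm, hmin⟩ ⟨_, m', hm', hmin'⟩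
    have hmm : m = m' := by
      by_contra h
      exact (hdisj h).le_bot ⟨hm, hm'⟩
    exact hij (Fin.ext (by omega : i.val = j.val))
  · -- union
    ext w
    simp only [Set.mem_iUnion, Set.mem_setOf_eq]
    constructor
    · rintro ⟨i, hr, _⟩; exact hr
    · intro hr
      have : w ∈ ⋃ i, P i := huniv ▸ Set.mem_univ w
      obtain ⟨m, hm⟩ := Set.mem_iUnion.mp this
      exact ⟨⟨min m.val (s-1), by omega⟩, hr, m, hm, rfl⟩
  · -- domination
    rintro i j hij b ⟨hrb, m, hmb, hmin⟩
    have hij' : i.val < j.val := hij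
    have hjs : j.val ≤ s - 1 := by have := j.isLt; omega
    have him : (⟨i.val, by omega⟩ : Fin k) < m := by simp [Fin.lt_def]; omega
    obtain ⟨a, ha, hadj⟩ := hdom ⟨i.val, by omega⟩ m him b hmb
    exact ⟨a, ⟨hrb.trans hadj.symm.reachable, ⟨i.val, by omega⟩, ha, by simp; omega⟩, hadj⟩
  · exact ⟨SimpleGraph.Reachable.refl u, ⟨lp - 1, by omega⟩, hu, by simp; omega⟩
  · exact ⟨hreach, ⟨lq - 1, by omega⟩, hv, by simp; omega⟩
end
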